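/- Let F_3 be the field with three elements and write x_1 = (x,y), x_2 = (w,z), x_3 = (u,v) ∈ F_3^2. Define the F_3-linear maps f_1,…,f_9 : (F_3^2)^3 → F_3^2 by f_1(X) = (x,y), f_2(X) = (x+w, y+z), f_3(X) = (w,z), f_4(X) = (x+u+2z, y+2v+w+z), f_5(X) = (u,v), f_6(X) = (x+2u+2v+2z, y+u+w+z), f_7(X) = (x+v, y+u+2v), f_8(X) = (x+u+w+z, y+2v+w), f_9(X) = (u+w, v+z). Then for every 3-element subset {i,j,k} of {1,…,9}: if {i,j,k} ∉ S0, the linear map (x_1,x_2,x_3) ↦ (f_i(X), f_j(X), f_k(X)) from (F_3^2)^3 to (F_3^2)^3 is bijective; and if {i,j,k} ∈ S0, the six component linear functionals of f_i, f_j, f_k span a subspace of dimension at most 4 of the dual space of F_3^6. Thus f_1,…,f_9 form a multilinear (partition) representation of the non-Pappus matroid over F_3 with blocks of dimension 2. -/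

import Mathlib

/-!
The nine maps are linear, so `X ↦ (f_i X, f_j X, f_k X)`, a map between spaces of the same
finite size, is bijective as soon as no nonzero `X` is killed by all three `f`s. Equivalently,
for every nonzero `X`, any three indices `t` with `f_t X = 0` form a line of `S0`: a finite
check over the `3 ^ 6` vectors `X`. On a line `{a, b, c}` the third map is a matrix combination
`f_c = A f_a + B f_b` of the other two, so the six coordinate functionals of the line lie in the
span of the four coming from `f_a` and `f_b`.
-/

/-- The collection `S0` of dependent 3-element subsets (3-point lines) of the
non-Pappus matroid on the ground set `{1, …, 9}` (here indexed by `Fin 9`, so that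
the paper's element `i` corresponds to `i - 1`):
`S0 = {{1,2,3},{1,5,7},{3,5,9},{2,4,7},{4,5,6},{2,6,9},{1,6,8},{3,4,8}}`. -/
def S0 : Finset (Finset (Fin 9)) :=
  {{0, 1, 2}, {0, 4, 6}, {2, 4, 8}, {1, 3, 6}, {3, 4, 5}, {1, 5, 8}, {0, 5, 7}, {2, 3, 7}}

/-- The nine maps `f_1, …, f_9 : (F_3^2)^3 → F_3^2` of the multilinear representation
of the non-Pappus matroid over `F_3`.  Writing `x_1 = (x, y)`, `x_2 = (w, z)`,
`x_3 = (u, v)` (so `x = X 0 0`, `y = X 0 1`, `w = X 1 0`, `z = X 1 1`, `u = X 2 0`,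
`v = X 2 1`), these are
`f_1(X) = (x, y)`, `f_2(X) = (x+w, y+z)`, `f_3(X) = (w, z)`,
`f_4(X) = (x+u+2z, y+2v+w+z)`, `f_5(X) = (u, v)`,
`f_6(X) = (x+2u+2v+2z, y+u+w+z)`, `f_7(X) = (x+v, y+u+2v)`,
`f_8(X) = (x+u+w+z, y+2v+w)`, `f_9(X) = (u+w, v+z)`. -/
def nonPappusMap : Fin 9 → (Fin 3 → Fin 2 → ZMod 3) → (Fin 2 → ZMod 3) :=
  ![fun X => ![X 0 0, X 0 1],
    fun X => ![X 0 0 + X 1 0, X 0 1 + X 1 1],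
    fun X => ![X 1 0, X 1 1],
    fun X => ![X 0 0 + X 2 0 + 2 * X 1 1, X 0 1 + 2 * X 2 1 + X 1 0 + X 1 1],
    fun X => ![X 2 0, X 2 1],
    fun X => ![X 0 0 + 2 * X 2 0 + 2 * X 2 1 + 2 * X 1 1, X 0 1 + X 2 0 + X 1 0 + X 1 1],
    fun X => ![X 0 0 + X 2 1, X 0 1 + X 2 0 + 2 * X 2 1],
    fun X => ![X 0 0 + X 2 0 + X 1 0 + X 1 1, X 0 1 + 2 * X 2 1 + X 1 0],
    fun X => ![X 2 0 + X 1 0, X 2 1 + X 1 1]]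

open Module Submodule Matrix

section BlockFunctionals

variable {K M ι : Type*} [Field K] [AddCommGroup M] [Module K M] {n : ℕ}

def blockFunctionals (g : ι → M →ₗ[K] (Fin n → K)) (s : Finset ι) : Set (Dual K M) :=
  {φ | ∃ t ∈ s, ∃ c : Fin n, φ = (LinearMap.proj c).comp (g t)}

theorem blockFunctionals_eq_range (g : ι → M →ₗ[K] (Fin n → K)) (s : Finset ι) :
    blockFunctionals g s = Set.range fun p : s × Fin n => (LinearMap.proj p.2).comp (g p.1) := by
  ext φ
  simp [blockFunctionals, eq_comm]

theorem finrank_span_blockFunctionals_le (g : ι → M →ₗ[K] (Fin n → K)) (s : Finset ι) :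
    finrank K (span K (blockFunctionals g s)) ≤ s.card * n := by
  rw [blockFunctionals_eq_range]
  exact (finrank_range_le_card _).trans_eq (by simp)

variable [DecidableEq ι]

theorem span_blockFunctionals_le_of_eq_mulVec_add_mulVec (g : ι → M →ₗ[K] (Fin n → K))
    {a b c : ι} {A B : Matrix (Fin n) (Fin n) K} (h : ∀ x, g c x = A *ᵥ g a x + B *ᵥ g b x) :
    span K (blockFunctionals g {a, b, c}) ≤ span K (blockFunctionals g {a, b}) := by
  have mem_a (e : Fin n) : (LinearMap.proj e).comp (g a) ∈ span K (blockFunctionals g {a, b}) :=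
    subset_span ⟨a, by simp, e, rfl⟩
  have mem_b (e : Fin n) : (LinearMap.proj e).comp (g b) ∈ span K (blockFunctionals g {a, b}) :=
    subset_span ⟨b, by simp, e, rfl⟩
  rw [span_le]
  rintro φ ⟨t, ht, d, rfl⟩
  simp only [Finset.mem_insert, Finset.mem_singleton] at ht
  rcases ht with rfl | rfl | rfl
  · exact mem_a d
  · exact mem_b d
  · have expand : (LinearMap.proj d).comp (g t) =
        ∑ e, A d e • (LinearMap.proj e).comp (g a) + ∑ e, B d e • (LinearMap.proj e).comp (g b) := by
      ext x
      simp [h, mulVec, dotProduct]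
    rw [expand]
    exact add_mem (sum_mem fun e _ => smul_mem _ _ (mem_a e))
      (sum_mem fun e _ => smul_mem _ _ (mem_b e))

theorem finrank_span_blockFunctionals_le_of_eq_mulVec_add_mulVec (g : ι → M →ₗ[K] (Fin n → K))
    {a b c : ι} {A B : Matrix (Fin n) (Fin n) K} (h : ∀ x, g c x = A *ᵥ g a x + B *ᵥ g b x) :
    finrank K (span K (blockFunctionals g {a, b, c})) ≤ 2 * n := by
  have : FiniteDimensional K (span K (blockFunctionals g {a, b})) :=
    FiniteDimensional.span_of_finite K (blockFunctionals_eq_range g _ ▸ Set.finite_range _)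
  calc finrank K (span K (blockFunctionals g {a, b, c}))
      ≤ finrank K (span K (blockFunctionals g {a, b})) :=
        finrank_mono (span_blockFunctionals_le_of_eq_mulVec_add_mulVec g h)
    _ ≤ ({a, b} : Finset ι).card * n := finrank_span_blockFunctionals_le g _
    _ ≤ 2 * n := Nat.mul_le_mul_right n Finset.card_le_two

end BlockFunctionals

theorem nonPappusMap_isLinearMap (i : Fin 9) : IsLinearMap (ZMod 3) (nonPappusMap i) := by
  constructor <;> intros <;> ext c <;> fin_cases i <;> fin_cases c <;> simp [nonPappusMap] <;> ring

-- Quantifying over `X` first lets `decide` visit each vector once rather than once per triple.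
theorem mem_S0_of_nonPappusMap_eq_zero : ∀ X : Fin 3 → Fin 2 → ZMod 3, X ≠ 0 →
    ∀ i, nonPappusMap i X = 0 → ∀ j, nonPappusMap j X = 0 → ∀ k, nonPappusMap k X = 0 →
    i ≠ j → i ≠ k → j ≠ k → ({i, j, k} : Finset (Fin 9)) ∈ S0 := by
  decide +kernel

theorem nonPappusMap_triple_bijective {i j k : Fin 9} (hij : i ≠ j) (hik : i ≠ k) (hjk : j ≠ k)
    (hS : ({i, j, k} : Finset (Fin 9)) ∉ S0) :
    Function.Bijective fun X : Fin 3 → Fin 2 → ZMod 3 =>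
      (nonPappusMap i X, nonPappusMap j X, nonPappusMap k X) := by
  refine (Fintype.bijective_iff_injective_and_card _).2 ⟨fun X Y hXY => ?_, by simp⟩
  simp only [Prod.mk.injEq] at hXY
  have vanish (t : Fin 9) (h : nonPappusMap t X = nonPappusMap t Y) :
      nonPappusMap t (X - Y) = 0 := by
    rw [(nonPappusMap_isLinearMap t).map_sub, h, sub_self]
  by_contra hne
  exact hS (mem_S0_of_nonPappusMap_eq_zero _ (sub_ne_zero.2 hne) i (vanish i hXY.1)
    j (vanish j hXY.2.1) k (vanish k hXY.2.2) hij hik hjk)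

theorem exists_nonPappusMap_eq_mulVec_add_mulVec : ∀ s ∈ S0, ∃ a b c : Fin 9, s = {a, b, c} ∧
    ∃ A B : Matrix (Fin 2) (Fin 2) (ZMod 3),
      ∀ X, nonPappusMap c X = A *ᵥ nonPappusMap a X + B *ᵥ nonPappusMap b X := by
  intro s hs
  simp only [S0, Finset.mem_insert, Finset.mem_singleton] at hs
  rcases hs with rfl | rfl | rfl | rfl | rfl | rfl | rfl | rfl <;>
  [ refine ⟨0, 1, 2, rfl, !![2, 0; 0, 2], 1, ?_⟩;
    refine ⟨0, 4, 6, rfl, 1, !![0, 1; 1, 2], ?_⟩;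
    refine ⟨2, 4, 8, rfl, 1, 1, ?_⟩;
    refine ⟨1, 3, 6, rfl, !![1, 1; 2, 0], !![0, 2; 1, 1], ?_⟩;
    refine ⟨3, 4, 5, rfl, 1, !![1, 2; 1, 1], ?_⟩;
    refine ⟨1, 5, 8, rfl, !![0, 2; 1, 1], !![0, 1; 2, 2], ?_⟩;
    refine ⟨0, 5, 7, rfl, !![1, 2; 2, 0], !![0, 1; 1, 1], ?_⟩;
    refine ⟨2, 3, 7, rfl, !![1, 2; 0, 2], 1, ?_⟩ ] <;>
  intro X <;> ext d <;> fin_cases d <;> simp [nonPappusMap] <;> ring_nf <;> reduce_mod_char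

/-- the maps `f_1, …, f_9` are `F_3`-linear, and, for every 3-element
subset `{i, j, k}` of `{1, …, 9}`: if `{i, j, k} ∉ S0` then the linear map
`X ↦ (f_i(X), f_j(X), f_k(X))` on `(F_3^2)^3` is bijective, while if
`{i, j, k} ∈ S0` then the six component linear functionals of `f_i, f_j, f_k` span a
subspace of dimension at most `4` of the dual of `F_3^6`.  Thus `f_1, …, f_9` form a
multilinear (partition) representation of the non-Pappus matroid over `F_3` with
blocks of dimension `2`. -/
theorem nonPappus_multilinear_representation :
    (∀ i : Fin 9, IsLinearMap (ZMod 3) (nonPappusMap i)) ∧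
    ∀ g : Fin 9 → (Fin 3 → Fin 2 → ZMod 3) →ₗ[ZMod 3] (Fin 2 → ZMod 3),
      (∀ i : Fin 9, ⇑(g i) = nonPappusMap i) →
      ∀ i j k : Fin 9, i ≠ j → i ≠ k → j ≠ k →
        (({i, j, k} : Finset (Fin 9)) ∉ S0 →
          Function.Bijective fun X : Fin 3 → Fin 2 → ZMod 3 =>
            (nonPappusMap i X, nonPappusMap j X, nonPappusMap k X)) ∧
        (({i, j, k} : Finset (Fin 9)) ∈ S0 →
          Module.finrank (ZMod 3) (Submodule.span (ZMod 3)
            {φ : Module.Dual (ZMod 3) (Fin 3 → Fin 2 → ZMod 3) |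
              ∃ t ∈ ({i, j, k} : Finset (Fin 9)), ∃ c : Fin 2,
                φ = (LinearMap.proj c).comp (g t)}) ≤ 4) := by
  refine ⟨nonPappusMap_isLinearMap, fun g hg i j k hij hik hjk =>
    ⟨nonPappusMap_triple_bijective hij hik hjk, fun hS => ?_⟩⟩
  obtain ⟨a, b, c, habc, A, B, hAB⟩ := exists_nonPappusMap_eq_mulVec_add_mulVec _ hS
  rw [habc]
  exact finrank_span_blockFunctionals_le_of_eq_mulVec_add_mulVec g (by simpa only [hg] using hAB)
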